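/- Let v, w ∈ ℝ³ satisfy ‖v‖ = ‖w‖ = 1 and ⟨v,w⟩ = 0, let B be a skew-symmetric real 3×3 matrix with B·v = 0 and B·w ≠ 0, and let A = [[B, w],[wᵀ, 0]] be the associated real 4×4 block matrix, assumed to satisfy A³ = 0. Let v̄ = (v₁, v₂, v₃, 0) and e₄ = (0,0,0,1), and define f : ℝ² → ℝ⁴ by f(t,s) = exp(tA) · (sinh(s)·v̄ + cosh(s)·e₄). Then f is a proper map: the preimage under f of every compact subset of ℝ⁴ is compact. In particular the image f(ℝ²) is a closed subset of ℝ⁴. -/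

import Mathlib

open Matrix RealInnerProductSpace

noncomputable section

/-- The Lorentz inner product `⟨x,y⟩_L = x₁y₁ + x₂y₂ + x₃y₃ − x₄y₄` on `ℝ⁴`. -/
def lorentz (x y : Fin 4 → ℝ) : ℝ :=
  x 0 * y 0 + x 1 * y 1 + x 2 * y 2 - x 3 * y 3

/-- The Lorentz signature matrix `J = diag(1,1,1,−1)`. -/
def lorentzJ : Matrix (Fin 4) (Fin 4) ℝ :=
  Matrix.diagonal ![1, 1, 1, -1]

/-- The block matrix `A = [[B, w], [wᵀ, 0]]`: upper-left `3×3` block `B`, last column the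
entries of `w` in the first three rows and `0` in the last, last row the entries of `w`
in the first three columns and `0` in the last. -/
def blockA (B : Matrix (Fin 3) (Fin 3) ℝ) (w : Fin 3 → ℝ) : Matrix (Fin 4) (Fin 4) ℝ :=
  fun i j =>
    if hi : (i : ℕ) < 3 then
      if hj : (j : ℕ) < 3 then B ⟨i, hi⟩ ⟨j, hj⟩ else w ⟨i, hi⟩
    else
      if hj : (j : ℕ) < 3 then w ⟨j, hj⟩ else 0

/-- The inclusion of `ℝ³` into `ℝ⁴` as the vectors with vanishing fourth coordinate. -/
def extend3 (v : Fin 3 → ℝ) : Fin 4 → ℝ :=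
  fun i => if h : (i : ℕ) < 3 then v ⟨i, h⟩ else 0

/-- The fourth canonical basis vector `e₄ = (0,0,0,1)` of `ℝ⁴`. -/
def e4 : Fin 4 → ℝ := fun i => if i = 3 then 1 else 0

/-!
Because `A³ = 0`, `exp(tA) = 1 + tA + (t²/2)A²`. For `u = sinh s • v̄ + cosh s • e₄` one has
`A u = cosh s • w̄` (from `B v = 0` and `⟨w, v⟩ = 0`) and `A² u = cosh s • (B w + e₄)` (from
`‖w‖ = 1`), so `f` is an explicit continuous map whose last coordinate is
`cosh s · (1 + t²/2) ≥ ‖(t, s)‖`. Hence `f` tends to infinity at infinity, i.e. it is proper,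
and proper maps have closed image.
-/

open Filter Real

theorem NormedSpace.exp_eq_of_pow_three_eq_zero {𝕂 𝔸 : Type*} [Field 𝕂] [CharZero 𝕂] [Ring 𝔸]
    [Algebra 𝕂 𝔸] [TopologicalSpace 𝔸] [IsTopologicalRing 𝔸] {x : 𝔸} (hx : x ^ 3 = 0) :
    NormedSpace.exp x = 1 + x + (2⁻¹ : 𝕂) • x ^ 2 := by
  have hvanish : ∀ n ∉ Finset.range 3, (n.factorial⁻¹ : 𝕂) • x ^ n = 0 := fun n hn => by
    rw [pow_eq_zero_of_le (by simpa using hn) hx, smul_zero]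
  rw [NormedSpace.exp_eq_tsum 𝕂]
  dsimp only
  rw [tsum_eq_sum hvanish]
  simp [Finset.sum_range_succ]

theorem Matrix.exp_smul_mulVec_of_pow_three_eq_zero {n 𝕂 : Type*} [Fintype n] [DecidableEq n]
    [Field 𝕂] [CharZero 𝕂] [TopologicalSpace 𝕂] [IsTopologicalRing 𝕂]
    {M : Matrix n n 𝕂} (hM : M ^ 3 = 0) (t : 𝕂) (x : n → 𝕂) :
    NormedSpace.exp (t • M) *ᵥ x = x + t • M *ᵥ x + (2⁻¹ * t ^ 2) • (M ^ 2) *ᵥ x := by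
  rw [NormedSpace.exp_eq_of_pow_three_eq_zero (𝕂 := 𝕂) (by rw [smul_pow, hM, smul_zero])]
  simp only [add_mulVec, one_mulVec, smul_mulVec, smul_pow, smul_smul]

section blockA

variable (B : Matrix (Fin 3) (Fin 3) ℝ) (w : Fin 3 → ℝ)

theorem blockA_mulVec_extend3 (x : Fin 3 → ℝ) :
    blockA B w *ᵥ extend3 x = extend3 (B *ᵥ x) + (w ⬝ᵥ x) • e4 := by
  ext i
  fin_cases i <;>
    simp [blockA, extend3, e4, mulVec, dotProduct, Fin.sum_univ_three, Fin.sum_univ_four]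

theorem blockA_mulVec_e4 : blockA B w *ᵥ e4 = extend3 w := by
  ext i
  fin_cases i <;> simp [blockA, extend3, e4, mulVec, dotProduct]

end blockA

theorem extend3_zero : extend3 0 = 0 := by
  ext i
  simp [extend3]

theorem extend3_apply_three (x : Fin 3 → ℝ) : extend3 x 3 = 0 :=
  dif_neg (by decide)

theorem e4_apply_three : e4 3 = 1 :=
  if_pos rfl

theorem exp_smul_blockA_mulVec_hyperbola {B : Matrix (Fin 3) (Fin 3) ℝ} {v w : Fin 3 → ℝ}
    (hA : blockA B w ^ 3 = 0) (hBv : B *ᵥ v = 0) (hwv : w ⬝ᵥ v = 0) (hww : w ⬝ᵥ w = 1)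
    (t s : ℝ) :
    NormedSpace.exp (t • blockA B w) *ᵥ (sinh s • extend3 v + cosh s • e4) =
      sinh s • extend3 v + cosh s • e4 + (t * cosh s) • extend3 w +
        (2⁻¹ * t ^ 2 * cosh s) • (extend3 (B *ᵥ w) + e4) := by
  have hAu : blockA B w *ᵥ (sinh s • extend3 v + cosh s • e4) = cosh s • extend3 w := by
    simp [mulVec_add, mulVec_smul, blockA_mulVec_extend3, blockA_mulVec_e4, hBv, hwv,
      extend3_zero]
  have hA2u : blockA B w ^ 2 *ᵥ (sinh s • extend3 v + cosh s • e4) =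
      cosh s • (extend3 (B *ᵥ w) + e4) := by
    rw [sq, ← mulVec_mulVec, hAu, mulVec_smul, blockA_mulVec_extend3, hww, one_smul]
  rw [exp_smul_mulVec_of_pow_three_eq_zero hA, hAu, hA2u, smul_smul, smul_smul, mul_assoc]

theorem Real.abs_le_cosh (x : ℝ) : |x| ≤ cosh x :=
  calc |x| ≤ sinh |x| := self_le_sinh_iff.2 (abs_nonneg x)
    _ ≤ cosh |x| := (sinh_lt_cosh _).le
    _ = cosh x := cosh_abs x

theorem norm_le_cosh_mul_one_add_sq_div_two (p : ℝ × ℝ) :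
    ‖p‖ ≤ cosh p.2 * (1 + p.1 ^ 2 / 2) := by
  have hcosh := one_le_cosh p.2
  rw [Prod.norm_def, Real.norm_eq_abs, Real.norm_eq_abs]
  refine max_le ?_ ?_
  · nlinarith [sq_nonneg (|p.1| - 1), sq_abs p.1]
  · nlinarith [abs_le_cosh p.2, sq_nonneg p.1]

theorem f_proper_general
    (v w : EuclideanSpace ℝ (Fin 3)) (hw : ‖w‖ = 1) (hvw : ⟪v, w⟫ = 0)
    (B : Matrix (Fin 3) (Fin 3) ℝ) (hBv : B.mulVec v = 0)
    (hA : blockA B w ^ 3 = 0)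
    (f : ℝ × ℝ → (Fin 4 → ℝ))
    (hf : ∀ p : ℝ × ℝ, f p = (NormedSpace.exp (p.1 • blockA B w)).mulVec
      (Real.sinh p.2 • extend3 v + Real.cosh p.2 • e4)) :
    (∀ K : Set (Fin 4 → ℝ), IsCompact K → IsCompact (f ⁻¹' K)) ∧
    IsClosed (Set.range f) := by
  have hwv : w.ofLp ⬝ᵥ v.ofLp = 0 := by
    simpa [EuclideanSpace.inner_eq_star_dotProduct] using hvw
  have hww : w.ofLp ⬝ᵥ w.ofLp = 1 := by
    have h := real_inner_self_eq_norm_sq w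
    rw [hw, one_pow, EuclideanSpace.inner_eq_star_dotProduct] at h
    simpa using h
  have hf' (p : ℝ × ℝ) := (hf p).trans (exp_smul_blockA_mulVec_hyperbola hA hBv hwv hww p.1 p.2)
  have hcont : Continuous f := by
    rw [funext hf']
    fun_prop
  have hnorm (p : ℝ × ℝ) : ‖p‖ ≤ ‖f p‖ :=
    calc ‖p‖ ≤ cosh p.2 * (1 + p.1 ^ 2 / 2) := norm_le_cosh_mul_one_add_sq_div_two p
      _ = f p 3 := by
        simp only [hf', Pi.add_apply, Pi.smul_apply, smul_eq_mul, extend3_apply_three,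
          e4_apply_three]
        ring
      _ ≤ ‖f p‖ := (le_abs_self _).trans (norm_le_pi_norm (f p) 3)
  have hproper : IsProperMap f := isProperMap_iff_tendsto_cocompact.2
    ⟨hcont, tendsto_cocompact_cocompact_of_norm fun ε => ⟨ε, fun p hp => hp.trans_le (hnorm p)⟩⟩
  exact ⟨fun K => hproper.isCompact_preimage, hproper.isClosedMap.isClosed_range⟩

/-- The map `f(t,s) = exp(tA)·(sinh(s)·v̄ + cosh(s)·e₄)` of the hyperbolic counterexample
is a proper map: preimages of compact sets are compact. In particular its image is a
closed subset of `ℝ⁴`. -/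
theorem f_proper
    (v w : EuclideanSpace ℝ (Fin 3)) (hv : ‖v‖ = 1) (hw : ‖w‖ = 1) (hvw : ⟪v, w⟫ = 0)
    (B : Matrix (Fin 3) (Fin 3) ℝ) (hB : Bᵀ = -B) (hBv : B.mulVec v = 0)
    (hBw : B.mulVec w ≠ 0) (hA : blockA B w ^ 3 = 0)
    (f : ℝ × ℝ → (Fin 4 → ℝ))
    (hf : ∀ p : ℝ × ℝ, f p = (NormedSpace.exp (p.1 • blockA B w)).mulVec
      (Real.sinh p.2 • extend3 v + Real.cosh p.2 • e4)) :
    (∀ K : Set (Fin 4 → ℝ), IsCompact K → IsCompact (f ⁻¹' K)) ∧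
    IsClosed (Set.range f) :=
  f_proper_general v w hw hvw B hBv hA f hf
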